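/- arXiv:2208.14948 — 2 statements merged into one kernel-verified Lean document; each statement's English description precedes it below -/
import Mathlib

section
/- Let X be a real random variable with E[X²] < ∞ and Laplace transform φ(s) = E[e^{−sX²}] for s > 0. Then for all s ∈ (0, ε] and all n ≥ 1: n·s·φ(s)^{n−1} ≤ e^{−1}/(φ(ε)·E[X² e^{−εX²}]), provided E[X² e^{−εX²}] > 0. -/
/-!
Put `Y = X² ≥ 0`, `φ(t) = E[e^{-tY}]` and `M = E[Y e^{-εY}]`. Integrating the pointwise inequality
`e^{-a} ≤ 1 - a e^{-a}` (that is, `1 + a ≤ e^a`) gives `φ(s) ≤ 1 - s E[Y e^{-sY}]`, and since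
`t ↦ E[Y e^{-tY}]` is nonincreasing, `φ(s) ≤ 1 - sM ≤ e^{-sM}` for `s ≤ ε`. Together with
`φ(ε) ≤ φ(s)` this yields `n s φ(s)^{n-1} φ(ε) M ≤ n s M e^{-n s M} ≤ e^{-1}`.
-/

open MeasureTheory Real

lemma Real.exp_neg_le_one_sub_mul_exp_neg (a : ℝ) : exp (-a) ≤ 1 - a * exp (-a) := by
  have : (1 + a) * exp (-a) ≤ 1 :=
    calc (1 + a) * exp (-a) ≤ exp a * exp (-a) := by gcongr; linarith [add_one_le_exp a]
      _ = 1 := by rw [← exp_add, add_neg_cancel, exp_zero]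
  linarith

lemma natCast_mul_pow_pred_mul_le_exp_neg_one {n : ℕ} {s a b m : ℝ} (hs : 0 ≤ s) (hb : 0 ≤ b)
    (hba : b ≤ a) (hm : 0 ≤ m) (ha : a ≤ exp (-(s * m))) :
    n * s * a ^ (n - 1) * b * m ≤ exp (-1) := by
  cases n with
  | zero => simpa using (exp_pos (-1)).le
  | succ k =>
    have ha0 : 0 ≤ a := hb.trans hba
    calc ((k + 1 : ℕ) : ℝ) * s * a ^ (k + 1 - 1) * b * m
        ≤ (k + 1 : ℕ) * s * a ^ k * a * m := by
          rw [Nat.add_sub_cancel]; gcongr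
      _ = (k + 1 : ℕ) * s * a ^ (k + 1) * m := by ring
      _ ≤ (k + 1 : ℕ) * s * exp (-(s * m)) ^ (k + 1) * m := by gcongr
      _ = ((k + 1 : ℕ) * s * m) * exp (-((k + 1 : ℕ) * s * m)) := by
          rw [← exp_nat_mul]; ring_nf
      _ ≤ exp (-1) := mul_exp_neg_le_exp_neg_one _

section LaplaceTransform

variable {Ω : Type*} [MeasurableSpace Ω] {μ : Measure Ω} {Y : Ω → ℝ} {s t : ℝ}

lemma integrable_exp_neg_mul [IsFiniteMeasure μ] (hY : AEStronglyMeasurable Y μ)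
    (hY0 : 0 ≤ᵐ[μ] Y) (ht : 0 ≤ t) : Integrable (fun ω => exp (-(t * Y ω))) μ := by
  refine Integrable.of_bound (continuous_exp.comp_aestronglyMeasurable (hY.const_mul t).neg) 1 ?_
  filter_upwards [hY0] with ω hω
  rw [norm_of_nonneg (exp_pos _).le, exp_le_one_iff, neg_nonpos]
  exact mul_nonneg ht hω

lemma integrable_mul_exp_neg_mul (hY : Integrable Y μ) (hY0 : 0 ≤ᵐ[μ] Y) (ht : 0 ≤ t) :
    Integrable (fun ω => Y ω * exp (-(t * Y ω))) μ := by
  refine hY.mono' (hY.aestronglyMeasurable.mul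
    (continuous_exp.comp_aestronglyMeasurable (hY.aestronglyMeasurable.const_mul t).neg)) ?_
  filter_upwards [hY0] with ω hω
  rw [norm_of_nonneg (mul_nonneg hω (exp_pos _).le)]
  exact mul_le_of_le_one_right hω (exp_le_one_iff.mpr (neg_nonpos.mpr (mul_nonneg ht hω)))

lemma integral_exp_neg_mul_le_of_le [IsFiniteMeasure μ] (hY : AEStronglyMeasurable Y μ)
    (hY0 : 0 ≤ᵐ[μ] Y) (hs : 0 ≤ s) (hst : s ≤ t) :
    ∫ ω, exp (-(t * Y ω)) ∂μ ≤ ∫ ω, exp (-(s * Y ω)) ∂μ := by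
  refine integral_mono_ae (integrable_exp_neg_mul hY hY0 (hs.trans hst))
    (integrable_exp_neg_mul hY hY0 hs) ?_
  filter_upwards [hY0] with ω hω
  gcongr

lemma integral_mul_exp_neg_mul_le_of_le (hY : Integrable Y μ) (hY0 : 0 ≤ᵐ[μ] Y) (hs : 0 ≤ s)
    (hst : s ≤ t) :
    ∫ ω, Y ω * exp (-(t * Y ω)) ∂μ ≤ ∫ ω, Y ω * exp (-(s * Y ω)) ∂μ := by
  refine integral_mono_ae (integrable_mul_exp_neg_mul hY hY0 (hs.trans hst))
    (integrable_mul_exp_neg_mul hY hY0 hs) ?_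
  filter_upwards [hY0] with ω hω
  gcongr

lemma integral_exp_neg_mul_le_one_sub [IsProbabilityMeasure μ] (hY : Integrable Y μ)
    (hY0 : 0 ≤ᵐ[μ] Y) (hs : 0 ≤ s) :
    ∫ ω, exp (-(s * Y ω)) ∂μ ≤ 1 - s * ∫ ω, Y ω * exp (-(s * Y ω)) ∂μ := by
  have hYe := (integrable_mul_exp_neg_mul hY hY0 hs).const_mul s
  calc ∫ ω, exp (-(s * Y ω)) ∂μ ≤ ∫ ω, (1 - s * (Y ω * exp (-(s * Y ω)))) ∂μ :=
        integral_mono (integrable_exp_neg_mul hY.aestronglyMeasurable hY0 hs)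
          ((integrable_const 1).sub hYe) fun ω => by
            simpa only [mul_assoc] using exp_neg_le_one_sub_mul_exp_neg (s * Y ω)
    _ = 1 - s * ∫ ω, Y ω * exp (-(s * Y ω)) ∂μ := by
        rw [integral_sub (integrable_const 1) hYe, integral_const, integral_const_mul,
          probReal_univ, one_smul]

lemma integral_exp_neg_mul_le_exp_neg [IsProbabilityMeasure μ] (hY : Integrable Y μ)
    (hY0 : 0 ≤ᵐ[μ] Y) (hs : 0 ≤ s) (hst : s ≤ t) :
    ∫ ω, exp (-(s * Y ω)) ∂μ ≤ exp (-(s * ∫ ω, Y ω * exp (-(t * Y ω)) ∂μ)) :=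
  calc ∫ ω, exp (-(s * Y ω)) ∂μ ≤ 1 - s * ∫ ω, Y ω * exp (-(s * Y ω)) ∂μ :=
        integral_exp_neg_mul_le_one_sub hY hY0 hs
    _ ≤ 1 - s * ∫ ω, Y ω * exp (-(t * Y ω)) ∂μ :=
        sub_le_sub_left (mul_le_mul_of_nonneg_left
          (integral_mul_exp_neg_mul_le_of_le hY hY0 hs hst) hs) 1
    _ ≤ exp (-(s * ∫ ω, Y ω * exp (-(t * Y ω)) ∂μ)) := one_sub_le_exp_neg _

end LaplaceTransform

theorem stmt14_general {Ω : Type*} [MeasurableSpace Ω] (μ : Measure Ω) [IsProbabilityMeasure μ]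
    (X : Ω → ℝ)
    (hint : Integrable (fun ω => (X ω) ^ 2) μ)
    (ε : ℝ)
    (hpos : 0 < ∫ ω, (X ω) ^ 2 * Real.exp (-(ε * (X ω) ^ 2)) ∂μ)
    (s : ℝ) (hs : s ∈ Set.Ioc 0 ε) (n : ℕ) :
    (n : ℝ) * s * (∫ ω, Real.exp (-(s * (X ω) ^ 2)) ∂μ) ^ (n - 1)
      ≤ Real.exp (-1) /
        ((∫ ω, Real.exp (-(ε * (X ω) ^ 2)) ∂μ) *
          ∫ ω, (X ω) ^ 2 * Real.exp (-(ε * (X ω) ^ 2)) ∂μ) := by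
  obtain ⟨hs0, hsε⟩ := hs
  have hY0 : 0 ≤ᵐ[μ] fun ω => X ω ^ 2 := ae_of_all _ fun ω => sq_nonneg (X ω)
  have hφε : 0 < ∫ ω, exp (-(ε * X ω ^ 2)) ∂μ :=
    integral_exp_pos (integrable_exp_neg_mul hint.aestronglyMeasurable hY0 (hs0.le.trans hsε))
  rw [le_div_iff₀ (mul_pos hφε hpos), ← mul_assoc]
  exact natCast_mul_pow_pred_mul_le_exp_neg_one hs0.le hφε.le
    (integral_exp_neg_mul_le_of_le hint.aestronglyMeasurable hY0 hs0.le hsε) hpos.le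
    (integral_exp_neg_mul_le_exp_neg hint hY0 hs0.le hsε)

/-- For a real random variable `X` with finite second moment and Laplace transform
`φ(s) = E[e^{-s X²}]`, one has for all `0 < s ≤ ε` and `n ≥ 1`:
`n s φ(s)^(n-1) ≤ e⁻¹ / (φ(ε) E[X² e^{-ε X²}])`, provided `E[X² e^{-ε X²}] > 0`. -/
theorem stmt14 {Ω : Type*} [MeasurableSpace Ω] (μ : Measure Ω) [IsProbabilityMeasure μ]
    (X : Ω → ℝ) (hmeas : Measurable X)
    (hint : Integrable (fun ω => (X ω) ^ 2) μ)
    (ε : ℝ) (hε : 0 < ε)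
    (hpos : 0 < ∫ ω, (X ω) ^ 2 * Real.exp (-(ε * (X ω) ^ 2)) ∂μ)
    (s : ℝ) (hs : s ∈ Set.Ioc 0 ε) (n : ℕ) (hn : 1 ≤ n) :
    (n : ℝ) * s * (∫ ω, Real.exp (-(s * (X ω) ^ 2)) ∂μ) ^ (n - 1)
      ≤ Real.exp (-1) /
        ((∫ ω, Real.exp (-(ε * (X ω) ^ 2)) ∂μ) *
          ∫ ω, (X ω) ^ 2 * Real.exp (-(ε * (X ω) ^ 2)) ∂μ) :=
  stmt14_general μ X hint ε hpos s hs n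
end

section
/- Let Y be a nonnegative random variable. If the truncated second moment V(x) = E[Y² 1{Y ≤ x}] is slowly varying at infinity, then so is h(x) = 2∫₀^x P(Y > u) u du, and conversely; moreover h(√x) = ∫₀^x P(Y² > y) dy for all x > 0. -/
open MeasureTheory Filter

/-- A function `L` is slowly varying at infinity if `L (t x) / L x → 1` as `x → ∞`
for every `t > 0`. -/
def SlowlyVarying (L : ℝ → ℝ) : Prop :=
  ∀ t : ℝ, 0 < t → Tendsto (fun x => L (t * x) / L x) atTop (nhds 1)

open Set Topology

/-!
Write `F u = P(Y > u)`. By the layer-cake formula both functions are moments of truncations: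
`h x = E[min(Y, x)²] = V x + x² F x` and `h (√x) = E[min(Y², x)]`. Hence `V` and `h` are slowly
varying together as soon as `x² F x` is negligible against either of them. Against `h` this
follows from `h x - h (x / 2) ≥ (3 / 4) x² F x`. Against `V` one sums over dyadic blocks:
`(2ᵏ x)² (F (2ᵏ x) - F (2ᵏ⁺¹ x)) ≤ V (2ᵏ⁺¹ x) - V (2ᵏ x) ≤ ε 2ᵏ V x` once `V (2 y) ≤ (1 + ε) V y`
for `y ≥ x`, and the right-hand sides divided by `(2ᵏ x)²` sum to at most `2 ε V x / x²`.
-/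

namespace SlowlyVarying

variable {f g : ℝ → ℝ}

lemma eventually_ne_zero (hf : SlowlyVarying f) : ∀ᶠ x in atTop, f x ≠ 0 := by
  filter_upwards [(hf 1 one_pos).eventually_ne one_ne_zero] with x hx h0
  simp [h0] at hx

lemma eventually_pos (hf : SlowlyVarying f) (hf0 : ∀ᶠ x in atTop, 0 ≤ f x) :
    ∀ᶠ x in atTop, 0 < f x := by
  filter_upwards [hf.eventually_ne_zero, hf0] with x hx hx0 using hx0.lt_of_ne' hx

lemma of_tendsto_div (hg : SlowlyVarying g) (hfg : Tendsto (fun x => f x / g x) atTop (𝓝 1)) :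
    SlowlyVarying f := by
  intro t ht
  have htx : Tendsto (fun x => t * x) atTop atTop := tendsto_id.const_mul_atTop ht
  have hne : ∀ᶠ x in atTop, f x / g x ≠ 0 := hfg.eventually_ne one_ne_zero
  have key := ((hfg.comp htx).mul (hg t ht)).mul (hfg.inv₀ one_ne_zero)
  rw [one_mul, inv_one, one_mul] at key
  refine key.congr' ?_
  filter_upwards [hne, htx.eventually hne] with x hx htx'
  obtain ⟨hfx, hgx⟩ := div_ne_zero_iff.1 hx
  obtain ⟨hftx, hgtx⟩ := div_ne_zero_iff.1 htx'
  simp only [Function.comp_apply]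
  field_simp

end SlowlyVarying

lemma le_two_mul_of_tendsto_zero_of_sub_succ_le {a : ℕ → ℝ} {C : ℝ} (hC : 0 ≤ C)
    (ha : Tendsto a atTop (𝓝 0)) (hstep : ∀ k, a k - a (k + 1) ≤ C * (1 / 2) ^ k) :
    a 0 ≤ 2 * C := by
  have hpartial : ∀ n, a 0 - 2 * C ≤ a n := fun n => by
    calc a 0 - 2 * C ≤ a 0 - ∑ k ∈ Finset.range n, C * (1 / 2) ^ k := by
          rw [← Finset.mul_sum]
          linarith [mul_le_mul_of_nonneg_left (sum_geometric_two_le n) hC]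
      _ ≤ a 0 - ∑ k ∈ Finset.range n, (a k - a (k + 1)) := by
          gcongr with k; exact hstep k
      _ = a n := by rw [Finset.sum_range_sub']; ring
  linarith [ge_of_tendsto' ha hpartial]

section Tauberian

variable {F V h : ℝ → ℝ}

lemma sq_mul_le_of_doubling (hF : Tendsto F atTop (𝓝 0)) (hV0 : ∀ x, 0 ≤ V x)
    (hFV : ∀ a b, 0 ≤ a → a ≤ b → a ^ 2 * (F a - F b) ≤ V b - V a)
    {x ε : ℝ} (hx : 0 < x) (hε : 0 ≤ ε) (hε1 : ε ≤ 1)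
    (hdoubling : ∀ y ≥ x, V (2 * y) ≤ (1 + ε) * V y) :
    x ^ 2 * F x ≤ 2 * ε * V x := by
  have hpow_ge : ∀ k : ℕ, x ≤ 2 ^ k * x := fun k =>
    le_mul_of_one_le_left hx.le (one_le_pow₀ one_le_two)
  have hgrowth : ∀ k : ℕ, V (2 ^ k * x) ≤ 2 ^ k * V x := by
    intro k
    induction k with
    | zero => simp
    | succ k ih =>
      calc V (2 ^ (k + 1) * x) = V (2 * (2 ^ k * x)) := by ring_nf
        _ ≤ (1 + ε) * V (2 ^ k * x) := hdoubling _ (hpow_ge k)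
        _ ≤ 2 * (2 ^ k * V x) := mul_le_mul (by linarith) ih (hV0 _) zero_le_two
        _ = 2 ^ (k + 1) * V x := by ring
  have hstep : ∀ k : ℕ, F (2 ^ k * x) - F (2 ^ (k + 1) * x) ≤ ε * V x / x ^ 2 * (1 / 2) ^ k := by
    intro k
    have hblock := hFV (2 ^ k * x) (2 ^ (k + 1) * x) (by positivity) (by gcongr <;> norm_num)
    have hVblock : V (2 ^ (k + 1) * x) - V (2 ^ k * x) ≤ ε * (2 ^ k * V x) := by
      have := hdoubling _ (hpow_ge k)
      rw [show 2 * (2 ^ k * x) = 2 ^ (k + 1) * x by ring] at this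
      nlinarith [hgrowth k]
    rw [show ε * V x / x ^ 2 * (1 / 2) ^ k = ε * (2 ^ k * V x) / (2 ^ k * x) ^ 2 by
      rw [div_pow, one_pow, mul_pow]; field_simp, le_div_iff₀ (by positivity)]
    linarith
  have hlim : Tendsto (fun k : ℕ => F (2 ^ k * x)) atTop (𝓝 0) :=
    hF.comp ((tendsto_pow_atTop_atTop_of_one_lt one_lt_two).atTop_mul_const hx)
  have := le_two_mul_of_tendsto_zero_of_sub_succ_le
    (div_nonneg (mul_nonneg hε (hV0 x)) (sq_nonneg x)) hlim hstep
  rw [pow_zero, one_mul, ← mul_div_assoc, le_div_iff₀ (by positivity)] at this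
  linarith

lemma tendsto_sq_mul_div_of_slowlyVarying (hV : SlowlyVarying V) (hF0 : ∀ x, 0 ≤ F x)
    (hF : Tendsto F atTop (𝓝 0)) (hV0 : ∀ x, 0 ≤ V x)
    (hFV : ∀ a b, 0 ≤ a → a ≤ b → a ^ 2 * (F a - F b) ≤ V b - V a) :
    Tendsto (fun x => x ^ 2 * F x / V x) atTop (𝓝 0) := by
  refine tendsto_order.2 ⟨fun δ hδ => Eventually.of_forall fun x =>
    hδ.trans_le (div_nonneg (mul_nonneg (sq_nonneg x) (hF0 x)) (hV0 x)), fun δ hδ => ?_⟩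
  set ε := min (δ / 4) 1
  have hε : 0 < ε := lt_min (by linarith) one_pos
  have hεδ : 2 * ε < δ := by linarith [min_le_left (δ / 4) 1]
  have hgood : ∀ᶠ y in atTop, V (2 * y) ≤ (1 + ε) * V y ∧ 0 < V y := by
    filter_upwards [(hV 2 two_pos).eventually_lt_const (lt_add_of_pos_right 1 hε),
      hV.eventually_pos (Eventually.of_forall hV0)] with y hy hVy
    exact ⟨((div_lt_iff₀ hVy).1 hy).le, hVy⟩
  obtain ⟨x₀, hx₀⟩ := eventually_atTop.1 hgood
  filter_upwards [eventually_ge_atTop x₀, eventually_gt_atTop 0] with x hx hx0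
  have hVx := (hx₀ x hx).2
  have := sq_mul_le_of_doubling hF hV0 hFV hx0 hε.le (min_le_right _ _)
    fun y hy => (hx₀ y (hx.trans hy)).1
  rw [div_lt_iff₀ hVx]
  nlinarith

lemma tendsto_sq_mul_div_of_slowlyVarying_of_eq_add (hh : SlowlyVarying h) (hF0 : ∀ x, 0 ≤ F x)
    (hV0 : ∀ x, 0 ≤ V x) (hFV : ∀ a b, 0 ≤ a → a ≤ b → a ^ 2 * (F a - F b) ≤ V b - V a)
    (hVh : ∀ x ≥ 0, h x = V x + x ^ 2 * F x) :
    Tendsto (fun x => x ^ 2 * F x / h x) atTop (𝓝 0) := by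
  have hpos : ∀ᶠ x in atTop, 0 < h x := hh.eventually_pos <| by
    filter_upwards [eventually_ge_atTop 0] with x hx
    rw [hVh x hx]
    exact add_nonneg (hV0 x) (mul_nonneg (sq_nonneg x) (hF0 x))
  have hhalf : Tendsto (fun x => 4 / 3 * (1 - h (1 / 2 * x) / h x)) atTop (𝓝 0) := by
    simpa using ((hh (1 / 2) one_half_pos).const_sub 1).const_mul (4 / 3 : ℝ)
  refine tendsto_of_tendsto_of_tendsto_of_le_of_le' tendsto_const_nhds hhalf ?_ ?_
  · filter_upwards [hpos, eventually_ge_atTop 0] with x hx hx0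
    exact div_nonneg (mul_nonneg (sq_nonneg x) (hF0 x)) hx.le
  · filter_upwards [hpos, eventually_ge_atTop 0] with x hx hx0
    have hblock := hFV (1 / 2 * x) x (by positivity) (by linarith)
    have hVh_x := hVh x hx0
    have hVh_half := hVh (1 / 2 * x) (by positivity)
    rw [show 4 / 3 * (1 - h (1 / 2 * x) / h x) = 4 / 3 * (h x - h (1 / 2 * x)) / h x by
      field_simp, div_le_div_iff_of_pos_right hx]
    linarith

theorem slowlyVarying_iff_of_eq_add_sq_mul (hF0 : ∀ x, 0 ≤ F x) (hF : Tendsto F atTop (𝓝 0))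
    (hV0 : ∀ x, 0 ≤ V x) (hFV : ∀ a b, 0 ≤ a → a ≤ b → a ^ 2 * (F a - F b) ≤ V b - V a)
    (hVh : ∀ x ≥ 0, h x = V x + x ^ 2 * F x) :
    SlowlyVarying V ↔ SlowlyVarying h := by
  constructor
  · intro hV
    refine hV.of_tendsto_div ?_
    have := (tendsto_sq_mul_div_of_slowlyVarying hV hF0 hF hV0 hFV).const_add 1
    rw [add_zero] at this
    refine this.congr' ?_
    filter_upwards [hV.eventually_ne_zero, eventually_ge_atTop 0] with x hx hx0
    rw [hVh x hx0, add_div, div_self hx]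
  · intro hh
    refine hh.of_tendsto_div ?_
    have := (tendsto_sq_mul_div_of_slowlyVarying_of_eq_add hh hF0 hV0 hFV hVh).const_sub 1
    rw [sub_zero] at this
    refine this.congr' ?_
    filter_upwards [hh.eventually_ne_zero, eventually_ge_atTop 0] with x hx hx0
    rw [eq_sub_of_add_eq (hVh x hx0).symm, sub_div, div_self hx]

end Tauberian

section LayerCake

variable {Ω : Type*} [MeasurableSpace Ω] {μ : Measure Ω} {f : Ω → ℝ}

lemma setIntegral_Ioi_measureReal_lt_min_mul (c : ℝ) (g : ℝ → ℝ) :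
    ∫ t in Ioi 0, μ.real {ω | t < min (f ω) c} * g t
      = ∫ t in Ioo 0 c, μ.real {ω | t < f ω} * g t := by
  rw [setIntegral_eq_of_subset_of_forall_sdiff_eq_zero measurableSet_Ioi Ioo_subset_Ioi_self]
  · refine setIntegral_congr_fun measurableSet_Ioo fun t ht => ?_
    simp only [lt_min_iff, ht.2, and_true]
  · intro t ht
    have hct : c ≤ t := not_lt.1 fun htc => ht.2 ⟨ht.1, htc⟩
    have hempty : {ω | t < min (f ω) c} = ∅ :=
      eq_empty_of_forall_notMem fun ω hω => (lt_min_iff.1 hω).2.not_ge hct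
    rw [hempty, measureReal_empty, zero_mul]

lemma integral_sq_eq_two_mul_integral_measureReal_lt_mul (hf : 0 ≤ f)
    (hint : Integrable (fun ω => f ω ^ 2) μ) :
    ∫ ω, f ω ^ 2 ∂μ = 2 * ∫ u in Ioi 0, μ.real {ω | u < f ω} * u := by
  rw [hint.integral_eq_integral_meas_lt (Eventually.of_forall fun ω => sq_nonneg (f ω)),
    ← integral_comp_rpow_Ioi_of_pos two_pos, ← integral_const_mul]
  refine setIntegral_congr_fun measurableSet_Ioi fun u (hu : 0 < u) => ?_
  have hsq : {ω | u ^ (2 : ℝ) < f ω ^ 2} = {ω | u < f ω} := by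
    ext ω
    simp only [mem_ofPred_eq, Real.rpow_two]
    exact pow_lt_pow_iff_left₀ hu.le (hf ω) two_ne_zero
  rw [hsq, smul_eq_mul, show (2 : ℝ) - 1 = 1 by norm_num, Real.rpow_one]
  ring

variable [IsFiniteMeasure μ]

lemma integral_min_eq_integral_measureReal_lt (hf : 0 ≤ f) (hfm : AEMeasurable f μ)
    {c : ℝ} (hc : 0 ≤ c) :
    ∫ ω, min (f ω) c ∂μ = ∫ t in Ioo 0 c, μ.real {ω | t < f ω} := by
  have hint : Integrable (fun ω => min (f ω) c) μ := by
    refine Integrable.of_bound (hfm.min aemeasurable_const).aestronglyMeasurable c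
      (Eventually.of_forall fun ω => ?_)
    rw [Real.norm_of_nonneg (le_min (hf ω) hc)]
    exact min_le_right _ _
  rw [hint.integral_eq_integral_meas_lt (Eventually.of_forall fun ω => le_min (hf ω) hc)]
  simpa using setIntegral_Ioi_measureReal_lt_min_mul (μ := μ) (f := f) c 1

lemma integral_min_sq_eq_two_mul_integral_measureReal_lt_mul (hf : 0 ≤ f)
    (hfm : AEMeasurable f μ) {c : ℝ} (hc : 0 ≤ c) :
    ∫ ω, min (f ω) c ^ 2 ∂μ = 2 * ∫ u in Ioo 0 c, μ.real {ω | u < f ω} * u := by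
  have hint : Integrable (fun ω => min (f ω) c ^ 2) μ := by
    refine Integrable.of_bound ((hfm.min aemeasurable_const).pow_const 2).aestronglyMeasurable
      (c ^ 2) (Eventually.of_forall fun ω => ?_)
    rw [Real.norm_of_nonneg (sq_nonneg _)]
    exact pow_le_pow_left₀ (le_min (hf ω) hc) (min_le_right _ _) 2
  rw [integral_sq_eq_two_mul_integral_measureReal_lt_mul (fun ω => le_min (hf ω) hc) hint]
  exact congrArg _ (setIntegral_Ioi_measureReal_lt_min_mul c id)

end LayerCake

section TruncatedMoments

variable {Ω : Type*} [MeasurableSpace Ω] {μ : Measure Ω} [IsFiniteMeasure μ] {Y : Ω → ℝ}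

lemma tendsto_measureReal_lt_atTop (hY : Measurable Y) :
    Tendsto (fun x => μ.real {ω | x < Y ω}) atTop (𝓝 0) := by
  have hanti : Antitone fun x : ℝ => {ω | x < Y ω} :=
    fun a b hab ω (hω : b < Y ω) => hab.trans_lt hω
  have hempty : ⋂ x : ℝ, {ω | x < Y ω} = ∅ :=
    eq_empty_of_forall_notMem fun ω hω => lt_irrefl (Y ω) (mem_iInter.1 hω (Y ω))
  have := tendsto_measure_iInter_atTop (μ := μ)
    (fun x => (measurableSet_lt measurable_const hY).nullMeasurableSet) hanti
    ⟨0, measure_ne_top _ _⟩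
  rw [hempty, measure_empty] at this
  exact (ENNReal.tendsto_toReal ENNReal.zero_ne_top).comp this

lemma integrable_indicator_le_sq (hY : Measurable Y) (hY0 : 0 ≤ Y) (x : ℝ) :
    Integrable ({ω | Y ω ≤ x}.indicator fun ω => Y ω ^ 2) μ := by
  refine Integrable.of_bound ((hY.pow_const 2).indicator
    (measurableSet_le hY measurable_const)).aestronglyMeasurable (x ^ 2)
    (Eventually.of_forall fun ω => ?_)
  simp only [indicator, mem_ofPred_eq]
  split_ifs with hω
  · rw [Real.norm_of_nonneg (sq_nonneg _)]
    exact pow_le_pow_left₀ (hY0 ω) hω 2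
  · simpa using sq_nonneg x

lemma integral_min_sq_eq_add (hY : Measurable Y) (hY0 : 0 ≤ Y) (x : ℝ) :
    ∫ ω, min (Y ω) x ^ 2 ∂μ
      = ∫ ω, {ω | Y ω ≤ x}.indicator (fun ω => Y ω ^ 2) ω ∂μ + x ^ 2 * μ.real {ω | x < Y ω} := by
  have hsplit : (fun ω => min (Y ω) x ^ 2) = fun ω =>
      {ω | Y ω ≤ x}.indicator (fun ω => Y ω ^ 2) ω
        + {ω | x < Y ω}.indicator (fun _ => x ^ 2) ω := by
    ext ω
    rcases le_or_gt (Y ω) x with hω | hω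
    · simp [indicator, hω, not_lt.2 hω]
    · simp [indicator, hω, hω.le, not_le.2 hω]
  have hmeas : MeasurableSet {ω | x < Y ω} := measurableSet_lt measurable_const hY
  rw [hsplit, integral_add (integrable_indicator_le_sq hY hY0 x)
    ((integrable_const _).indicator hmeas), integral_indicator_const _ hmeas, smul_eq_mul,
    mul_comm]

lemma sq_mul_measureReal_lt_sub_le (hY : Measurable Y) (hY0 : 0 ≤ Y) {a b : ℝ} (ha : 0 ≤ a)
    (hab : a ≤ b) :
    a ^ 2 * (μ.real {ω | a < Y ω} - μ.real {ω | b < Y ω})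
      ≤ ∫ ω, {ω | Y ω ≤ b}.indicator (fun ω => Y ω ^ 2) ω ∂μ
        - ∫ ω, {ω | Y ω ≤ a}.indicator (fun ω => Y ω ^ 2) ω ∂μ := by
  have hmeas : ∀ c, MeasurableSet {ω | c < Y ω} := fun c => measurableSet_lt measurable_const hY
  have hint : ∀ c, Integrable ({ω | c < Y ω}.indicator (1 : Ω → ℝ)) μ :=
    fun c => (integrable_const 1).indicator (hmeas c)
  rw [← integral_indicator_one (hmeas a), ← integral_indicator_one (hmeas b),
    ← integral_sub (hint a) (hint b), ← integral_const_mul,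
    ← integral_sub (integrable_indicator_le_sq hY hY0 b) (integrable_indicator_le_sq hY hY0 a)]
  refine integral_mono (((hint a).sub (hint b)).const_mul _)
    ((integrable_indicator_le_sq hY hY0 b).sub (integrable_indicator_le_sq hY hY0 a)) fun ω => ?_
  simp only [indicator, mem_ofPred_eq, Pi.one_apply]
  split_ifs <;> nlinarith

end TruncatedMoments

lemma min_sq_sqrt {a b : ℝ} (ha : 0 ≤ a) (hb : 0 ≤ b) : min a √b ^ 2 = min (a ^ 2) b := by
  rcases le_total a √b with h | h
  · rw [min_eq_left h, min_eq_left ((Real.le_sqrt ha hb).1 h)]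
  · rw [min_eq_right h, min_eq_right ((Real.sqrt_le_left ha).1 h), Real.sq_sqrt hb]

/-- For a nonnegative random variable `Y`, the truncated second moment
`V(x) = E[Y² 1{Y ≤ x}]` is slowly varying iff `h(x) = 2 ∫₀^x P(Y > u) u du` is
slowly varying; moreover `h(√x) = ∫₀^x P(Y² > y) dy` for all `x > 0`. -/
theorem stmt18 {Ω : Type*} [MeasurableSpace Ω] (μ : Measure Ω) [IsProbabilityMeasure μ]
    (Y : Ω → ℝ) (hmeas : Measurable Y) (hpos : ∀ ω, 0 ≤ Y ω) :
    (SlowlyVarying (fun x => ∫ ω, Set.indicator {ω' | Y ω' ≤ x} (fun ω' => (Y ω') ^ 2) ω ∂μ)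
        ↔ SlowlyVarying (fun x => 2 * ∫ u in Set.Ioo 0 x, (μ {ω | u < Y ω}).toReal * u)) ∧
      ∀ x : ℝ, 0 < x →
        2 * (∫ u in Set.Ioo 0 (Real.sqrt x), (μ {ω | u < Y ω}).toReal * u)
          = ∫ y in Set.Ioo 0 x, (μ {ω | y < (Y ω) ^ 2}).toReal := by
  have hmin : ∀ x ≥ 0, 2 * ∫ u in Ioo 0 x, μ.real {ω | u < Y ω} * u = ∫ ω, min (Y ω) x ^ 2 ∂μ :=
    fun x hx =>
      (integral_min_sq_eq_two_mul_integral_measureReal_lt_mul hpos hmeas.aemeasurable hx).symm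
  refine ⟨slowlyVarying_iff_of_eq_add_sq_mul (fun _ => measureReal_nonneg)
    (tendsto_measureReal_lt_atTop hmeas)
    (fun x => integral_nonneg fun ω => indicator_nonneg (fun ω _ => sq_nonneg (Y ω)) ω)
    (fun a b ha hab => sq_mul_measureReal_lt_sub_le hmeas hpos ha hab)
    fun x hx => (hmin x hx).trans (integral_min_sq_eq_add hmeas hpos x), fun x hx => ?_⟩
  calc 2 * ∫ u in Ioo 0 √x, μ.real {ω | u < Y ω} * u = ∫ ω, min (Y ω) √x ^ 2 ∂μ :=
        hmin _ (Real.sqrt_nonneg x)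
    _ = ∫ ω, min (Y ω ^ 2) x ∂μ := by simp only [min_sq_sqrt (hpos _) hx.le]
    _ = ∫ y in Ioo 0 x, μ.real {ω | y < Y ω ^ 2} :=
        integral_min_eq_integral_measureReal_lt (fun ω => sq_nonneg (Y ω))
          (hmeas.pow_const 2).aemeasurable hx.le
end
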